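/- arXiv:2107.07765 — 4 statements merged into one kernel-verified Lean document; each statement's English description precedes it below -/
import Mathlib

section
/- Let G be a locally compact Hausdorff topological group and let X be a totally disconnected locally compact Hausdorff space equipped with a continuous, faithful action of G such that for every non-empty compact open subset α of X, the induced action of the rigid stabilizer R_G(α) on α is minimal and proximal. Then for every compact subset P of G with 1 ∉ P there exists an integer r ≥ 1 such that every closed subgroup H of G satisfying gHg⁻¹ ∩ P ≠ ∅ for all g ∈ G has at most r finite orbits in X. -/
/-!
Every `p ∈ P` moves some point, so by continuity and compactness there are finitely many
nonempty open sets `W₁, …, Wₙ` such that each element of `P` displaces one of them.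
Minimality and proximality of the rigid stabilizers give `G` great freedom on finite
configurations: `R_G(α)` squeezes any finite subset of `α` into any open set meeting `α`, and,
as `X` has no isolated points, finitely many disjoint finite sets can be pushed simultaneously
into prescribed nonempty open sets. If `H` had `n` finite orbits `Y₁, …, Yₙ`, some `g` would
give `g • Yᵢ ⊆ Wᵢ`; then `gHg⁻¹` preserves every `g • Yᵢ`, so displaces no `Wᵢ` and misses `P`.
-/

open Set Filter Topology MulAction Pointwise

universe u v

instance {X : Type*} [TopologicalSpace X] [LocallyCompactSpace X] [T2Space X]
    [TotallyDisconnectedSpace X] : PrespectralSpace X := by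
  refine ⟨TopologicalSpace.isTopologicalBasis_of_isOpen_of_nhds (fun _ h => h.1)
    fun x U hx hU => ?_⟩
  obtain ⟨s, hs, hxs, hsU⟩ := exists_compact_subset hU hx
  obtain ⟨V, hV, hxV, hVs⟩ :=
    loc_compact_Haus_tot_disc_of_zero_dim.mem_nhds_iff.mp (isOpen_interior.mem_nhds hxs)
  exact ⟨V, ⟨hV.isOpen, hs.of_isClosed_subset hV.isClosed (hVs.trans interior_subset)⟩, hxV,
    (hVs.trans interior_subset).trans hsU⟩

theorem Set.finite_and_ncard_lt_of_isEmpty_embedding {ι : Type u} {β : Type v} [Finite ι]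
    {S : Set β} (h : IsEmpty (ι ↪ S)) : S.Finite ∧ S.ncard < Nat.card ι := by
  have hlt : Cardinal.lift.{u} (Cardinal.mk S) < Cardinal.lift.{v} (Cardinal.mk ι) :=
    lt_of_not_ge fun hle => h.false (Cardinal.lift_mk_le'.1 hle).some
  rw [← Nat.cast_card (α := ι), Cardinal.lift_natCast, Cardinal.lift_lt_nat_iff] at hlt
  have hS : S.Finite :=
    Cardinal.lt_aleph0_iff_set_finite.1 (hlt.trans Cardinal.natCast_lt_aleph0)
  have := hS.to_subtype
  refine ⟨hS, ?_⟩
  rwa [← Nat.card_coe_set_eq, ← Nat.cast_lt (α := Cardinal), Nat.cast_card]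

section Dynamics

variable {M Y : Type*} [Monoid M] [MulAction M Y] [TopologicalSpace Y]

theorem mem_closure_orbit_of_equivariant {Z : Type*} [MulAction M Z] [TopologicalSpace Z]
    {f : Z → Y} (hf : Continuous f) (hfM : ∀ (g : M) z, f (g • z) = g • f z) {z w : Z}
    (hw : w ∈ closure (orbit M z)) : f w ∈ closure (orbit M (f z)) :=
  map_mem_closure hf hw (by rintro _ ⟨g, rfl⟩; exact ⟨g, (hfM g z).symm⟩)

variable [ContinuousConstSMul M Y]

theorem closure_orbit_subset_of_mem_closure_orbit {u v : Y} (hu : u ∈ closure (orbit M v)) :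
    closure (orbit M u) ⊆ closure (orbit M v) :=
  closure_minimal
    (by rintro _ ⟨g, rfl⟩; exact smul_closure_orbit_subset g v (smul_mem_smul_set hu))
    isClosed_closure

variable [T2Space Y] {K : Set Y}

theorem exists_const_mem_closure_orbit_of_proximal (hK : IsCompact K) (hKne : K.Nonempty)
    (hKM : ∀ (g : M), ∀ x ∈ K, g • x ∈ K)
    (hprox : ∀ x ∈ K, ∀ y ∈ K, ∃ z, (z, z) ∈ closure (orbit M (x, y))) :
    ∀ {n : ℕ} (v : Fin n → Y), (∀ i, v i ∈ K) → ∃ z ∈ K, (fun _ => z) ∈ closure (orbit M v)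
  | 0, v, _ => ⟨hKne.some, hKne.some_mem,
      Subsingleton.elim v (fun _ => hKne.some) ▸ subset_closure (mem_orbit_self v)⟩
  | n + 1, v, hv => by
    have hcl : closure (orbit M v) ⊆ univ.pi fun _ => K :=
      closure_minimal (by rintro _ ⟨g, rfl⟩ i _; exact hKM g _ (hv i))
        (isClosed_set_pi fun _ _ => hK.isClosed)
    obtain ⟨z', hz'K, hz'⟩ := exists_const_mem_closure_orbit_of_proximal hK hKne hKM hprox
      (Fin.tail v) fun i => hv _
    -- the orbit closure of `v` is compact, so its image under `Fin.tail` is closed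
    have htail : closure (orbit M (Fin.tail v)) ⊆ Fin.tail '' closure (orbit M v) :=
      closure_minimal (by rintro _ ⟨g, rfl⟩; exact ⟨g • v, subset_closure (mem_orbit v g), rfl⟩)
        (((isCompact_univ_pi fun _ => hK).of_isClosed_subset isClosed_closure hcl).image
          (by fun_prop)).isClosed
    obtain ⟨u, hu, hut⟩ := htail hz'
    obtain ⟨z, hz⟩ := hprox (u 0) (hcl hu 0 (mem_univ _)) z' hz'K
    let φ : Y × Y → Fin (n + 1) → Y := fun p => Fin.cons p.1 fun _ => p.2
    have hφM : ∀ (g : M) p, φ (g • p) = g • φ p := fun g p => by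
      ext i; cases i using Fin.cases <;> rfl
    have hφu : φ (u 0, z') = u := by
      change Fin.cons (u 0) _ = u
      rw [← hut, Fin.cons_self_tail]
    have hφz : φ (z, z) = fun _ => z := by ext i; cases i using Fin.cases <;> rfl
    have hzv : (fun _ => z) ∈ closure (orbit M v) :=
      hφz ▸ closure_orbit_subset_of_mem_closure_orbit hu
        (hφu ▸ mem_closure_orbit_of_equivariant (by fun_prop) hφM hz)
    exact ⟨z, hcl hzv 0 (mem_univ _), hzv⟩

theorem exists_smul_subset_of_minimal_of_proximal (hK : IsCompact K)
    (hKM : ∀ (g : M), ∀ x ∈ K, g • x ∈ K)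
    (hmin : ∀ x ∈ K, ∀ y ∈ K, y ∈ closure (orbit M x))
    (hprox : ∀ x ∈ K, ∀ y ∈ K, ∃ z, (z, z) ∈ closure (orbit M (x, y)))
    {F : Set Y} (hF : F.Finite) (hFK : F ⊆ K) {U : Set Y} (hU : IsOpen U)
    (hUK : (U ∩ K).Nonempty) : ∃ g : M, g • F ⊆ U := by
  obtain ⟨n, v, -, rfl⟩ := hF.fin_param
  obtain ⟨z, hzK, hz⟩ := exists_const_mem_closure_orbit_of_proximal hK
    (hUK.mono inter_subset_right) hKM hprox v (range_subset_iff.1 hFK)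
  obtain ⟨y, hyU, hyK⟩ := hUK
  obtain ⟨_, hgz, g, rfl⟩ := mem_closure_iff.1 (hmin z hzK y hyK) U hU hyU
  obtain ⟨_, hhv, h, rfl⟩ := mem_closure_iff.1 hz ((g • ·) ⁻¹' univ.pi fun _ => U)
    ((isOpen_set_pi finite_univ fun _ _ => hU).preimage (continuous_const_smul g))
    fun _ _ => hgz
  refine ⟨g * h, ?_⟩
  rw [smul_set_range, range_subset_iff]
  intro i
  rw [mul_smul]
  exact hhv i (mem_univ _)

end Dynamics

section FixingSubgroup

variable {G X : Type*} [Group G] [MulAction G X]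

theorem orbit_subgroup_eq_setOf (H : Subgroup G) (x : X) :
    orbit H x = {y | ∃ h ∈ H, h • x = y} := by
  ext; simp [mem_orbit_iff]

theorem smul_mem_of_mem_fixingSubgroup_compl {α : Set X} {g : G} (hg : g ∈ fixingSubgroup G αᶜ)
    {x : X} (hx : x ∈ α) : g • x ∈ α :=
  orbit_fixingSubgroup_compl_subset G X hx (mem_orbit x (⟨g, hg⟩ : fixingSubgroup G αᶜ))

theorem smul_set_eq_of_mem_fixingSubgroup {s t : Set X} {g : G} (hg : g ∈ fixingSubgroup G s)
    (ht : t ⊆ s) : g • t = t :=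
  set_mem_fixedBy_of_subset_fixedBy (ht.trans ((mem_fixingSubgroup_iff_subset_fixedBy G).1 hg))

variable [TopologicalSpace X] [T2Space X] [TopologicalSpace G] [ContinuousSMul G X]
  [FaithfulSMul G X]

theorem exists_isOpen_eventually_disjoint_smul {p : G} (hp : p ≠ 1) :
    ∃ W : Set X, IsOpen W ∧ W.Nonempty ∧ ∀ᶠ q in 𝓝 p, Disjoint (q • W) W := by
  obtain ⟨x, hx⟩ : ∃ x : X, p • x ≠ x := by
    contrapose! hp
    exact FaithfulSMul.eq_of_smul_eq_smul fun x => by rw [hp x, one_smul]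
  obtain ⟨B, A, hB, hA, hxB, hxA, hBA⟩ := t2_separation hx
  obtain ⟨N, V, hN, hV, hpN, hxV, hNV⟩ :=
    isOpen_prod_iff.1 (hB.preimage continuous_smul) p x hxB
  refine ⟨A ∩ V, hA.inter hV, ⟨x, hxA, hxV⟩,
    eventually_of_mem (hN.mem_nhds hpN) fun q hq => ?_⟩
  rw [Set.disjoint_left]
  rintro _ ⟨y, hy, rfl⟩ hqy
  exact disjoint_left.1 hBA (hNV (mk_mem_prod hq hy.2)) hqy.1

theorem IsCompact.exists_finset_disjoint_smul {P : Set G} (hP : IsCompact P) (h1 : 1 ∉ P) :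
    ∃ (t : Finset G) (W : G → Set X), (∀ p ∈ t, IsOpen (W p) ∧ (W p).Nonempty) ∧
      ∀ q ∈ P, ∃ p ∈ t, Disjoint (q • W p) (W p) := by
  choose! W hWo hWne hW using fun p (hp : p ∈ P) =>
    exists_isOpen_eventually_disjoint_smul (X := X) (ne_of_mem_of_not_mem hp h1)
  obtain ⟨t, htP, hPt⟩ := hP.elim_nhds_subcover (fun p => {q | Disjoint (q • W p) (W p)}) hW
  refine ⟨t, W, fun p hp => ⟨hWo p (htP p hp), hWne p (htP p hp)⟩, fun q hq => ?_⟩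
  simpa using hPt hq

end FixingSubgroup

section RigidStabilizers

variable (G X : Type*) [Group G] [MulAction G X] [TopologicalSpace X]

/-- `fixingSubgroup G αᶜ` is the rigid stabilizer `R_G(α)`. -/
def RigidStabilizersActMinimally : Prop :=
  ∀ α : Set X, IsCompact α → IsOpen α → α.Nonempty →
    ∀ x ∈ α, ∀ y ∈ α, y ∈ closure (orbit (fixingSubgroup G αᶜ) x)

def RigidStabilizersActProximally : Prop :=
  ∀ α : Set X, IsCompact α → IsOpen α → α.Nonempty →
    ∀ x ∈ α, ∀ y ∈ α, ∃ z, (z, z) ∈ closure (orbit (fixingSubgroup G αᶜ) (x, y))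

variable {G X} [T2Space X] [TopologicalSpace G] [ContinuousSMul G X]
  (hmin : RigidStabilizersActMinimally G X) (hprox : RigidStabilizersActProximally G X)
include hmin hprox

theorem exists_mem_fixingSubgroup_smul_subset {α : Set X} (hαc : IsCompact α) (hαo : IsOpen α)
    {F : Set X} (hF : F.Finite) (hFα : F ⊆ α) {U : Set X} (hU : IsOpen U)
    (hUα : (U ∩ α).Nonempty) : ∃ g ∈ fixingSubgroup G αᶜ, g • F ⊆ U := by
  have hαne : α.Nonempty := hUα.mono inter_subset_right
  obtain ⟨g, hg⟩ := exists_smul_subset_of_minimal_of_proximal hαc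
    (fun g _ hx => smul_mem_of_mem_fixingSubgroup_compl g.2 hx) (hmin α hαc hαo hαne)
    (hprox α hαc hαo hαne) hF hFα hU hUα
  exact ⟨g, g.2, hg⟩

variable [LocallyCompactSpace X] [TotallyDisconnectedSpace X]

theorem perfectSpace_of_rigidStabilizers [Nontrivial X] : PerfectSpace X := by
  refine perfectSpace_iff_forall_not_isolated.2 fun a => neBot_iff.2 fun h => ?_
  have ha : IsOpen {a} := (isOpen_singleton_iff_punctured_nhds a).2 h
  obtain ⟨b, hba⟩ := exists_ne a
  obtain ⟨K, hKc, hKo, hbK, -⟩ := PrespectralSpace.exists_isCompact_and_isOpen_between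
    isCompact_singleton isOpen_univ (subset_univ {b})
  have hαc : IsCompact (insert a K) := hKc.insert a
  have hαo : IsOpen (insert a K) := ha.union hKo
  obtain ⟨z, hz⟩ := hprox _ hαc hαo (insert_nonempty a K) a (mem_insert a K) b
    (mem_insert_of_mem a (hbK rfl))
  have hzα : z ∈ insert a K := (closure_minimal
    (by rintro _ ⟨g, rfl⟩; exact ⟨smul_mem_of_mem_fixingSubgroup_compl g.2 (mem_insert a K),
      smul_mem_of_mem_fixingSubgroup_compl g.2 (mem_insert_of_mem a (hbK rfl))⟩)
    (hαc.isClosed.prod hαc.isClosed) hz).1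
  -- minimality moves `z` onto the isolated point `a`, dragging the diagonal point `(z, z)` along
  obtain ⟨_, hgz, g, rfl⟩ := mem_closure_iff.1 (hmin _ hαc hαo ⟨a, mem_insert a K⟩ z hzα a
    (mem_insert a K)) {a} ha rfl
  replace hgz : g • z = a := hgz
  have haa : (a, a) ∈ closure (orbit (fixingSubgroup G (insert a K)ᶜ) (a, b)) :=
    smul_closure_orbit_subset g (a, b) ⟨(z, z), hz, by simp [hgz]⟩
  obtain ⟨_, ⟨hka, hkb⟩, k, rfl⟩ := mem_closure_iff.1 haa ({a} ×ˢ {a}) (ha.prod ha) ⟨rfl, rfl⟩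
  exact hba (smul_left_cancel k (hkb.trans hka.symm))

variable [PerfectSpace X]

theorem exists_smul_subset_of_pairwiseDisjoint {ι : Type*} (s : Finset ι) {Y U : ι → Set X}
    (hY : ∀ i ∈ s, (Y i).Finite) (hYs : (s : Set ι).PairwiseDisjoint Y)
    (hU : ∀ i ∈ s, IsOpen (U i)) (hUne : ∀ i ∈ s, (U i).Nonempty) :
    ∃ g : G, ∀ i ∈ s, g • Y i ⊆ U i := by
  classical
  induction s using Finset.induction_on with
  | empty => exact ⟨1, by simp⟩
  | insert j s hj ih =>
    simp only [Finset.mem_insert, forall_eq_or_imp, Finset.coe_insert] at *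
    obtain ⟨g, hg⟩ := ih hY.2 (hYs.subset (subset_insert j s)) hU.2 hUne.2
    set F := ⋃ i ∈ s, g • Y i
    have hF : F.Finite := s.finite_toSet.biUnion fun i hi => (hY.2 i hi).smul_set
    have hYF : Disjoint (g • Y j) F := disjoint_iUnion₂_right.2 fun i hi =>
      disjoint_smul_set.2 (hYs (mem_insert j s) (mem_insert_of_mem j hi)
        (ne_of_mem_of_not_mem hi hj).symm)
    -- move `g • Y j` into `U j` inside a compact open set avoiding `F`, hence fixing `F`
    obtain ⟨u, huU, huF⟩ :=
      ((infinite_of_mem_nhds _ (hU.1.mem_nhds hUne.1.some_mem)).sdiff hF).nonempty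
    obtain ⟨α, hαc, hαo, hsub, hαF⟩ := PrespectralSpace.exists_isCompact_and_isOpen_between
      (hY.1.smul_set.insert u).isCompact hF.isClosed.isOpen_compl
      (insert_subset huF (subset_compl_iff_disjoint_right.2 hYF))
    obtain ⟨k, hk, hkY⟩ := exists_mem_fixingSubgroup_smul_subset hmin hprox hαc hαo
      hY.1.smul_set ((subset_insert u _).trans hsub) hU.1 ⟨u, huU, hsub (mem_insert u _)⟩
    refine ⟨k * g, by rwa [mul_smul], fun i hi => ?_⟩
    rw [mul_smul, smul_set_eq_of_mem_fixingSubgroup hk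
      ((subset_iUnion₂ (s := fun i _ => g • Y i) i hi).trans (subset_compl_comm.1 hαF))]
    exact hg i hi

theorem isEmpty_embedding_finite_orbits_of_confining {ι : Type*} [Fintype ι] {W : ι → Set X}
    (hW : ∀ i, IsOpen (W i)) (hWne : ∀ i, (W i).Nonempty) {P : Set G}
    (hPW : ∀ q ∈ P, ∃ i, Disjoint (q • W i) (W i)) {H : Subgroup G}
    (hconf : ∀ g : G, ∃ h ∈ H, g * h * g⁻¹ ∈ P) :
    IsEmpty (ι ↪ {O : Set X | (∃ x, O = orbit H x) ∧ O.Finite}) := by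
  refine ⟨fun e => ?_⟩
  choose x hx using fun i => (e i).2.1
  have hdisj : ((Finset.univ : Finset ι) : Set ι).PairwiseDisjoint fun i => orbit H (x i) :=
    fun i _ j _ hij => (orbit.eq_or_disjoint (x i) (x j)).resolve_left fun h =>
      hij (e.injective (Subtype.ext ((hx i).trans (h.trans (hx j).symm))))
  obtain ⟨g, hg⟩ := exists_smul_subset_of_pairwiseDisjoint hmin hprox Finset.univ
    (fun i _ => hx i ▸ (e i).2.2) hdisj (fun i _ => hW i) (fun i _ => hWne i)
  obtain ⟨h, hh, hP⟩ := hconf g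
  obtain ⟨i, hi⟩ := hPW _ hP
  have hx₁ : g • x i ∈ W i := hg i (Finset.mem_univ i) (smul_mem_smul_set (mem_orbit_self _))
  have hx₂ : g • (h • x i) ∈ W i :=
    hg i (Finset.mem_univ i) (smul_mem_smul_set (mem_orbit _ (⟨h, hh⟩ : H)))
  exact disjoint_left.1 hi ⟨g • x i, hx₁, by simp [mul_smul]⟩ hx₂

end RigidStabilizers

theorem finitely_many_finite_orbits_of_confining_set_general
    {G X : Type*} [Group G] [TopologicalSpace G]
    [TopologicalSpace X] [LocallyCompactSpace X] [T2Space X] [TotallyDisconnectedSpace X]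
    [MulAction G X] [ContinuousSMul G X] [FaithfulSMul G X]
    (hmin : ∀ α : Set X, IsCompact α → IsOpen α → α.Nonempty →
      ∀ x ∈ α, ∀ y ∈ α, y ∈ closure {z : X | ∃ g : G, (∀ w ∉ α, g • w = w) ∧ g • x = z})
    (hprox : ∀ α : Set X, IsCompact α → IsOpen α → α.Nonempty →
      ∀ x ∈ α, ∀ y ∈ α, ∃ z : X, (z, z) ∈
        closure {p : X × X | ∃ g : G, (∀ w ∉ α, g • w = w) ∧ p = (g • x, g • y)})
    (P : Set G) (hP : IsCompact P) (h1 : (1 : G) ∉ P) :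
    ∃ r : ℕ, 1 ≤ r ∧ ∀ H : Subgroup G, IsClosed (H : Set G) →
      (∀ g : G, ∃ h ∈ H, g * h * g⁻¹ ∈ P) →
      {O : Set X | (∃ x : X, O = {y : X | ∃ h ∈ H, h • x = y}) ∧ O.Finite}.Finite ∧
      {O : Set X | (∃ x : X, O = {y : X | ∃ h ∈ H, h • x = y}) ∧ O.Finite}.ncard ≤ r := by
  have hmin' : RigidStabilizersActMinimally G X := by
    simpa only [RigidStabilizersActMinimally, orbit_subgroup_eq_setOf, mem_fixingSubgroup_iff,
      mem_compl_iff] using hmin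
  have hprox' : RigidStabilizersActProximally G X := by
    simpa only [RigidStabilizersActProximally, orbit_subgroup_eq_setOf, mem_fixingSubgroup_iff,
      mem_compl_iff, Prod.smul_mk, eq_comm] using hprox
  obtain ⟨t, W, hW, hPW⟩ := hP.exists_finset_disjoint_smul (X := X) h1
  refine ⟨Nat.card t + 1, Nat.le_add_left 1 _, fun H _ hconf => ?_⟩
  rcases subsingleton_or_nontrivial X with hX | hX
  · have : Subsingleton G :=
      ⟨fun _ _ => FaithfulSMul.eq_of_smul_eq_smul fun x : X => Subsingleton.elim _ _⟩
    obtain ⟨h, -, hP1⟩ := hconf 1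
    exact absurd (Subsingleton.elim _ (1 : G) ▸ hP1) h1
  have := perfectSpace_of_rigidStabilizers hmin' hprox'
  simp only [← orbit_subgroup_eq_setOf]
  obtain ⟨hfin, hlt⟩ := Set.finite_and_ncard_lt_of_isEmpty_embedding
    (isEmpty_embedding_finite_orbits_of_confining hmin' hprox' (ι := t) (W := fun p => W p)
      (fun p => (hW p p.2).1) (fun p => (hW p p.2).2)
      (fun q hq => let ⟨p, hp, hqp⟩ := hPW q hq; ⟨⟨p, hp⟩, hqp⟩) hconf)
  exact ⟨hfin, hlt.le.trans (Nat.le_succ _)⟩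

/-- Let `G` be a locally compact Hausdorff group and `X` a totally disconnected locally compact
Hausdorff space with a continuous, faithful `G`-action such that for every non-empty compact
open `α ⊆ X` the induced action of the rigid stabilizer `R_G(α) = {g | ∀ w ∉ α, g • w = w}`
on `α` is minimal and proximal. Then for every compact `P ⊆ G` with `1 ∉ P` there is an
integer `r ≥ 1` such that every closed subgroup `H` of `G` all of whose conjugates meet `P`
has at most `r` finite orbits in `X`. -/
theorem finitely_many_finite_orbits_of_confining_set
    {G X : Type*} [Group G] [TopologicalSpace G] [IsTopologicalGroup G]
    [LocallyCompactSpace G] [T2Space G]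
    [TopologicalSpace X] [LocallyCompactSpace X] [T2Space X] [TotallyDisconnectedSpace X]
    [MulAction G X] [ContinuousSMul G X] [FaithfulSMul G X]
    (hmin : ∀ α : Set X, IsCompact α → IsOpen α → α.Nonempty →
      ∀ x ∈ α, ∀ y ∈ α, y ∈ closure {z : X | ∃ g : G, (∀ w ∉ α, g • w = w) ∧ g • x = z})
    (hprox : ∀ α : Set X, IsCompact α → IsOpen α → α.Nonempty →
      ∀ x ∈ α, ∀ y ∈ α, ∃ z : X, (z, z) ∈
        closure {p : X × X | ∃ g : G, (∀ w ∉ α, g • w = w) ∧ p = (g • x, g • y)})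
    (P : Set G) (hP : IsCompact P) (h1 : (1 : G) ∉ P) :
    ∃ r : ℕ, 1 ≤ r ∧ ∀ H : Subgroup G, IsClosed (H : Set G) →
      (∀ g : G, ∃ h ∈ H, g * h * g⁻¹ ∈ P) →
      {O : Set X | (∃ x : X, O = {y : X | ∃ h ∈ H, h • x = y}) ∧ O.Finite}.Finite ∧
      {O : Set X | (∃ x : X, O = {y : X | ∃ h ∈ H, h • x = y}) ∧ O.Finite}.ncard ≤ r :=
  finitely_many_finite_orbits_of_confining_set_general hmin hprox P hP h1
end

section
/- Let n be a positive integer and let A and B be subgroups of the symmetric group Sym({1,…,n}) such that Sym({1,…,n}) = AB, i.e. every permutation can be written as a product ab with a ∈ A and b ∈ B. If A is transitive and imprimitive on {1,…,n}, then B has at most two orbits on {1,…,n}, and some B-orbit has cardinality at least n − 1. -/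
/-!
If `Sym(n) = AB` and `s` is a `B`-invariant set, then every permutation maps `s` where some
element of `A` does, so `A` is transitive on the subsets of size `|s|`. A transitive group with a
block `Δ`, `1 < |Δ| < n`, is not transitive on the `r`-subsets for `2 ≤ r ≤ n - 2`: the number of
pairs inside a translate of `Δ` is invariant, but it changes when a point `u ∈ Δ` of a set `{u} ∪ T`
is exchanged for a point `w` of a disjoint translate, provided `T` meets `Δ` in more points than
it meets the translate containing `w`. A `B`-orbit of size between `2` and `n - 2`, or any
`2`-subset if `B` is trivial, would be such an invariant set (`n ≥ 2|Δ| ≥ 4`).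
-/

open MulAction Finset
open scoped Pointwise

theorem Set.exists_forall_mem_or_eq_of_card_le_ncard_add_one {α : Type*} [Finite α] [Nonempty α]
    {s : Set α} (hs : Nat.card α ≤ s.ncard + 1) : ∃ y, ∀ z, z ∈ s ∨ z = y := by
  obtain ⟨y, hy⟩ :=
    (Set.ncard_le_one_iff_subset_singleton (s := sᶜ)).1 (by rw [Set.ncard_compl]; omega)
  exact ⟨y, fun z => (em (z ∈ s)).imp_right fun hz => hy hz⟩

theorem Finset.exists_card_inter_lt_card_inter {α : Type*} [Fintype α] [DecidableEq α]
    {D E : Finset α} (hDE : Disjoint D E) (hED : #E ≤ #D) {u w w' : α} (hu : u ∈ D) (hw : w ∈ E)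
    (hw' : w' ∈ E) (hww' : w ≠ w') {k : ℕ} (hk : 1 ≤ k) (hkα : k + 3 ≤ Fintype.card α) :
    ∃ T : Finset α, #T = k ∧ u ∉ T ∧ w ∉ T ∧ #(T ∩ E) < #(T ∩ D) := by
  rcases le_or_gt k #(D.erase u) with hkD | hDk
  · obtain ⟨T, hTD, hT⟩ := exists_subset_card_eq hkD
    have hTD' : T ⊆ D := hTD.trans (erase_subset u D)
    refine ⟨T, hT, fun h => by simpa using hTD h, fun h => disjoint_left.1 hDE (hTD' h) hw, ?_⟩
    rw [inter_eq_left.2 hTD', disjoint_iff_inter_eq_empty.1 (disjoint_of_subset_left hTD' hDE),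
      card_empty]
    omega
  · have hsub : D.erase u ⊆ univ \ {u, w, w'} := by
      intro z hz
      have hzE : z ∉ E := disjoint_left.1 hDE (mem_of_mem_erase hz)
      simp only [mem_sdiff, mem_univ, mem_insert, mem_singleton, true_and, not_or]
      exact ⟨ne_of_mem_erase hz, fun h => hzE (h ▸ hw), fun h => hzE (h ▸ hw')⟩
    have hcompl : #(univ \ {u, w, w'}) = Fintype.card α - 3 := by
      rw [card_sdiff_of_subset (subset_univ _), card_univ, card_insert_of_notMem, card_pair hww']
      simp only [mem_insert, mem_singleton, not_or]
      exact ⟨fun h => disjoint_left.1 hDE hu (h ▸ hw), fun h => disjoint_left.1 hDE hu (h ▸ hw')⟩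
    obtain ⟨T, hDT, hTu, hT⟩ := exists_subsuperset_card_eq hsub hDk.le (by omega)
    have hTu' : ∀ z ∈ T, z ≠ u ∧ z ≠ w ∧ z ≠ w' := fun z hz => by simpa using hTu hz
    refine ⟨T, hT, fun h => (hTu' u h).1 rfl, fun h => (hTu' w h).2.1 rfl, ?_⟩
    have hTD : T ∩ D = D.erase u := by
      ext z
      simp only [mem_inter, mem_erase]
      exact ⟨fun ⟨hzT, hzD⟩ => ⟨(hTu' z hzT).1, hzD⟩,
        fun ⟨hzu, hzD⟩ => ⟨hDT (mem_erase.2 ⟨hzu, hzD⟩), hzD⟩⟩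
    have hTE : T ∩ E ⊆ (E.erase w).erase w' := by
      intro z hz
      obtain ⟨hzT, hzE⟩ := mem_inter.1 hz
      exact mem_erase.2 ⟨(hTu' z hzT).2.2, mem_erase.2 ⟨(hTu' z hzT).2.1, hzE⟩⟩
    have hTE' := card_le_card hTE
    rw [card_erase_of_mem (mem_erase.2 ⟨hww'.symm, hw'⟩), card_erase_of_mem hw] at hTE'
    have hE : 1 < #E := one_lt_card.2 ⟨w, hw, w', hw', hww'⟩
    rw [hTD, card_erase_of_mem hu]
    omega

namespace MulAction

variable {G α : Type*} [Group G] [MulAction G α]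

theorem IsPretransitive.of_forall_eq_mul_of_forall_smul_eq {X : Type*} [MulAction G X]
    [IsPretransitive G X] {A B : Subgroup G} (hAB : ∀ g : G, ∃ a ∈ A, ∃ b ∈ B, g = a * b) {x : X}
    (hx : ∀ b ∈ B, b • x = x) : IsPretransitive A X := by
  rw [isPretransitive_iff_base x]
  intro y
  obtain ⟨g, rfl⟩ := MulAction.exists_smul_eq G x y
  obtain ⟨a, ha, b, hb, rfl⟩ := hAB g
  exact ⟨⟨a, ha⟩, by rw [mul_smul, hx b hb]; rfl⟩

section Finset

variable [DecidableEq α]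

variable (G) in
theorem exists_invariant_finset_of_ncard_orbit_add_two_le [Fintype α]
    (hα : 4 ≤ Fintype.card α) (horb : ∀ x : α, (orbit G x).ncard + 2 ≤ Fintype.card α) :
    ∃ s : Finset α, (∀ g : G, g • s = s) ∧ 2 ≤ #s ∧ #s + 2 ≤ Fintype.card α := by
  classical
  by_cases hmove : ∃ x : α, 2 ≤ (orbit G x).ncard
  · obtain ⟨x, hx⟩ := hmove
    refine ⟨(orbit G x).toFinset, fun g => ?_, ?_, ?_⟩
    · ext z
      rw [← Finset.inv_smul_mem_iff, Set.mem_toFinset, Set.mem_toFinset, ← orbit_eq_iff,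
        orbit_smul, orbit_eq_iff]
    · rwa [← Set.ncard_eq_toFinset_card']
    · rw [← Set.ncard_eq_toFinset_card']
      exact horb x
  · push Not at hmove
    have hfix (g : G) (x : α) : g • x = x :=
      (Set.ncard_le_one_iff (Set.toFinite _)).1 (Nat.le_of_lt_succ (hmove x)) (mem_orbit x g)
        (mem_orbit_self x)
    obtain ⟨s, -, hs⟩ := exists_subset_card_eq (s := (univ : Finset α)) (n := 2)
      (by rw [card_univ]; omega)
    refine ⟨s, fun g => ?_, hs.ge, by omega⟩
    simp [smul_finset_def, hfix]

variable (G) in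
open Classical in
noncomputable def translatePairs (Δ s : Finset α) : Finset (Finset α) :=
  {p ∈ s.powersetCard 2 | ∃ g : G, p ⊆ g • Δ}

theorem translatePairs_smul (Δ s : Finset α) (g : G) :
    translatePairs G Δ (g • s) = g • translatePairs G Δ s := by
  ext p
  rw [← Finset.inv_smul_mem_iff]
  simp only [translatePairs, mem_filter, mem_powersetCard, card_smul_finset]
  rw [← smul_finset_subset_smul_finset_iff (a := g⁻¹), inv_smul_smul]
  refine and_congr_right fun _ => ⟨fun ⟨k, hk⟩ => ⟨g⁻¹ * k, ?_⟩, fun ⟨k, hk⟩ => ⟨g * k, ?_⟩⟩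
  · rwa [mul_smul, smul_finset_subset_smul_finset_iff]
  · rwa [mul_smul, ← smul_finset_subset_smul_finset_iff (a := g⁻¹), inv_smul_smul]

theorem IsBlock.pair_subset_smul_iff {Δ : Finset α} (hB : IsBlock G (Δ : Set α)) {h : G}
    {x y : α} (hx : x ∈ h • Δ) : (∃ g : G, {x, y} ⊆ g • Δ) ↔ y ∈ h • Δ := by
  refine ⟨fun ⟨g, hg⟩ => ?_, fun hy => ⟨h, insert_subset hx (singleton_subset_iff.2 hy)⟩⟩
  have hgh : g • Δ = h • Δ := by
    apply coe_injective
    push_cast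
    exact hB.smul_eq_smul_of_nonempty
      ⟨x, by exact_mod_cast mem_inter.2 ⟨hg (mem_insert_self x {y}), hx⟩⟩
  exact hgh ▸ hg (mem_insert_of_mem (mem_singleton_self y))

theorem IsBlock.card_translatePairs_insert {Δ s : Finset α} (hB : IsBlock G (Δ : Set α))
    {h : G} {x : α} (hx : x ∈ h • Δ) (hxs : x ∉ s) :
    #(translatePairs G Δ (insert x s)) = #(translatePairs G Δ s) + #(s ∩ h • Δ) := by
  classical
  have hnew : {p ∈ (powersetCard 1 s).image (insert x) | ∃ g : G, p ⊆ g • Δ} =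
      (s ∩ h • Δ).image (fun y => {x, y}) := by
    ext p
    simp only [mem_filter, mem_image, powersetCard_one, mem_map, mem_inter,
      exists_exists_and_eq_and, Function.Embedding.coeFn_mk]
    constructor
    · rintro ⟨⟨y, hy, rfl⟩, hxy⟩
      exact ⟨y, ⟨hy, (hB.pair_subset_smul_iff hx).1 hxy⟩, rfl⟩
    · rintro ⟨y, ⟨hy, hyΔ⟩, rfl⟩
      exact ⟨⟨y, hy, rfl⟩, (hB.pair_subset_smul_iff hx).2 hyΔ⟩
  have hinj : Set.InjOn (fun y => ({x, y} : Finset α)) (s ∩ h • Δ : Finset α) := by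
    intro a ha b _ hab
    have hxa : a ≠ x := ne_of_mem_of_not_mem (mem_inter.1 ha).1 hxs
    have : a ∈ ({x, b} : Finset α) := by simp [← hab]
    simpa [hxa] using this
  rw [translatePairs, translatePairs, powersetCard_succ_insert hxs, filter_union,
    card_union_of_disjoint, hnew, card_image_of_injOn hinj]
  refine disjoint_filter_filter (disjoint_left.2 fun p hp hp' => hxs ?_)
  obtain ⟨q, -, rfl⟩ := mem_image.1 hp'
  exact (mem_powersetCard.1 hp).1 (mem_insert_self x q)

theorem IsBlock.exists_disjoint_smul [IsPretransitive G α] {Δ : Finset α}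
    (hB : IsBlock G (Δ : Set α)) (hΔ : Δ.Nonempty) {p : α} (hp : p ∉ Δ) :
    ∃ g : G, Disjoint (g • Δ) Δ := by
  obtain ⟨δ, hδ⟩ := hΔ
  obtain ⟨g, rfl⟩ := exists_smul_eq G δ p
  refine ⟨g, ?_⟩
  rcases hB.smul_eq_or_disjoint g with h | h
  · exact absurd (by rw [← mem_coe, ← h]; exact Set.smul_mem_smul_set hδ) hp
  · rwa [← disjoint_coe, coe_smul_finset]

theorem IsBlock.not_isPretransitive_powersetCard [Fintype α] [IsPretransitive G α]
    {Δ : Finset α} (hB : IsBlock G (Δ : Set α)) (hΔ : 1 < #Δ) (hΔα : #Δ < Fintype.card α)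
    {r : ℕ} (hr : 2 ≤ r) (hrα : r + 2 ≤ Fintype.card α) :
    ¬ IsPretransitive G (Set.powersetCard α r) := by
  obtain ⟨p, -, hp⟩ := exists_mem_notMem_of_card_lt_card (s := Δ) (t := Finset.univ) (by simpa)
  obtain ⟨g₀, hg₀⟩ := hB.exists_disjoint_smul (card_pos.1 (by omega)) hp
  obtain ⟨u, hu⟩ := card_pos.1 (by omega : 0 < #Δ)
  obtain ⟨w, hw, w', hw', hww'⟩ := one_lt_card.1 (by rwa [card_smul_finset] : 1 < #(g₀ • Δ))
  obtain ⟨T, hT, huT, hwT, hlt⟩ := exists_card_inter_lt_card_inter hg₀.symm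
    (card_smul_finset g₀ Δ).le hu hw hw' hww' (k := r - 1) (by omega) (by omega)
  intro
  obtain ⟨g, hg⟩ := exists_smul_eq G
    (⟨insert u T, Set.powersetCard.mem_iff.2 (by rw [card_insert_of_notMem huT]; omega)⟩ :
      Set.powersetCard α r)
    ⟨insert w T, Set.powersetCard.mem_iff.2 (by rw [card_insert_of_notMem hwT]; omega)⟩
  have hcard := congrArg (fun s : Set.powersetCard α r => #(translatePairs G Δ s)) hg
  simp only [Set.powersetCard.coe_smul, translatePairs_smul, card_smul_finset] at hcard
  rw [hB.card_translatePairs_insert (h := 1) (by rwa [one_smul]) huT,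
    hB.card_translatePairs_insert hw hwT, one_smul] at hcard
  omega

end Finset

end MulAction

theorem factorization_symmetric_group_orbits_general
    (n : ℕ)
    (A B : Subgroup (Equiv.Perm (Fin n)))
    (hAB : ∀ σ : Equiv.Perm (Fin n), ∃ a ∈ A, ∃ b ∈ B, σ = a * b)
    (htrans : ∀ x y : Fin n, ∃ a ∈ A, a x = y)
    (himprim : ∃ Δ : Finset (Fin n), 1 < Δ.card ∧ Δ.card < n ∧
      ∀ a ∈ A, Δ.image (a : Fin n → Fin n) = Δ ∨ Disjoint (Δ.image (a : Fin n → Fin n)) Δ) :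
    (∃ x y : Fin n, ∀ z : Fin n, (∃ b ∈ B, b x = z) ∨ (∃ b ∈ B, b y = z)) ∧
    (∃ x : Fin n, n - 1 ≤ {z : Fin n | ∃ b ∈ B, b x = z}.ncard) := by
  obtain ⟨Δ, hΔ, hΔn, himp⟩ := himprim
  have : IsPretransitive A (Fin n) :=
    ⟨fun x y => (htrans x y).elim fun a ha => ⟨⟨a, ha.1⟩, ha.2⟩⟩
  have hblock : IsBlock A (Δ : Set (Fin n)) := isBlock_iff_smul_eq_or_disjoint.2 fun a => by
    rw [← coe_smul_finset, coe_inj, disjoint_coe]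
    exact himp a a.2
  have hn : 4 ≤ n := by
    by_contra! h
    have := congrArg Set.ncard (hblock.eq_univ_of_card_lt
      (by simp only [Nat.card_eq_fintype_card, Fintype.card_fin, Set.ncard_coe_finset]; omega))
    simp only [Set.ncard_coe_finset, Set.ncard_univ, Nat.card_eq_fintype_card,
      Fintype.card_fin] at this
    omega
  have horbit (x : Fin n) : {z : Fin n | ∃ b ∈ B, b x = z} = orbit B x := by
    ext z
    simp [mem_orbit_iff]
  obtain ⟨x, hx⟩ : ∃ x : Fin n, n - 1 ≤ (orbit B x).ncard := by
    by_contra! hsmall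
    obtain ⟨s, hs, hs2, hsn⟩ := exists_invariant_finset_of_ncard_orbit_add_two_le B (α := Fin n)
      (by simpa) fun x => by simpa using (by have := hsmall x; omega : (orbit B x).ncard + 2 ≤ n)
    have := Set.powersetCard.isPretransitive (α := Fin n) (n := #s)
    exact hblock.not_isPretransitive_powersetCard hΔ (by simpa) hs2 hsn
      (IsPretransitive.of_forall_eq_mul_of_forall_smul_eq hAB
        (x := (⟨s, rfl⟩ : Set.powersetCard _ #s)) fun b hb => Subtype.ext (hs ⟨b, hb⟩))
  have : Nonempty (Fin n) := ⟨x⟩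
  obtain ⟨y, hy⟩ := Set.exists_forall_mem_or_eq_of_card_le_ncard_add_one (s := orbit B x)
    (by simp only [Nat.card_eq_fintype_card, Fintype.card_fin]; omega)
  refine ⟨⟨x, y, fun z => (hy z).imp (fun h => ?_) fun h => ⟨1, B.one_mem, h.symm⟩⟩,
    x, horbit x ▸ hx⟩
  rwa [← horbit] at h

/-- If `Sym(n) = A * B` for subgroups `A, B` with `A` transitive and imprimitive, then `B` has
at most two orbits on `{1,…,n}`, one of which has cardinality at least `n - 1`. -/
theorem factorization_symmetric_group_orbits
    (n : ℕ) (hn : 0 < n)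
    (A B : Subgroup (Equiv.Perm (Fin n)))
    (hAB : ∀ σ : Equiv.Perm (Fin n), ∃ a ∈ A, ∃ b ∈ B, σ = a * b)
    (htrans : ∀ x y : Fin n, ∃ a ∈ A, a x = y)
    (himprim : ∃ Δ : Finset (Fin n), 1 < Δ.card ∧ Δ.card < n ∧
      ∀ a ∈ A, Δ.image (a : Fin n → Fin n) = Δ ∨ Disjoint (Δ.image (a : Fin n → Fin n)) Δ) :
    (∃ x y : Fin n, ∀ z : Fin n, (∃ b ∈ B, b x = z) ∨ (∃ b ∈ B, b y = z)) ∧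
    (∃ x : Fin n, n - 1 ≤ {z : Fin n | ∃ b ∈ B, b x = z}.ncard) :=
  factorization_symmetric_group_orbits_general n A B hAB htrans himprim
end

section
/- Let n and m be integers with 2 ≤ m and 2m ≤ n. If A is a transitive and imprimitive subgroup of the symmetric group Sym({1,…,n}), then the induced action of A on the collection of all m-element subsets of {1,…,n} is not transitive. -/
/-!
The translates of an imprimitivity block `Δ` partition `{1,…,n}` into `q ≥ 2` blocks of size
`d ≥ 2`, and the number of blocks that a set meets is invariant under `A`. An `m`-set packed into
`c = ⌈m/d⌉` blocks and an `m`-set spread over `min m q > c` blocks therefore lie in different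
`A`-orbits.
-/

open Finset Function Equiv

lemma exists_ceilDiv_lt {d q m : ℕ} (hd : 2 ≤ d) (hq : 2 ≤ q) (hm : 2 ≤ m)
    (hmq : 2 * m ≤ q * d) :
    ∃ c, m ≤ c * d ∧ c < m ∧ c < q := by
  have hk_le : (m - 1) / d * d + 1 ≤ m := by have := Nat.div_mul_le_self (m - 1) d; omega
  have hk_lt : m ≤ (m - 1) / d * d + d := by
    have := Nat.lt_div_mul_add (a := m - 1) (b := d) (by omega)
    omega
  generalize (m - 1) / d = k at hk_le hk_lt
  refine ⟨k + 1, by nlinarith, by nlinarith, ?_⟩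
  by_contra! h
  -- `q ≤ k + 1` gives `2m ≤ qd ≤ m - 1 + d`, hence `kd ≤ m - 1 < d`
  have : k = 0 := by nlinarith
  omega

section MeetCount

variable {X : Type*} [DecidableEq X]

def meetCount (𝓑 : Finset (Finset X)) (S : Finset X) : ℕ :=
  #{B ∈ 𝓑 | ¬Disjoint B S}

lemma meetCount_image {𝓑 : Finset (Finset X)} {f : X → X} (hf : Injective f)
    (hf𝓑 : 𝓑.image (image f) = 𝓑) (S : Finset X) :
    meetCount 𝓑 (S.image f) = meetCount 𝓑 S := by
  conv_lhs =>
    rw [meetCount, ← hf𝓑, filter_image, card_image_of_injective _ (image_injective hf)]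
  simp only [meetCount, disjoint_image hf]

variable {𝓑 : Finset (Finset X)} {d : ℕ}

lemma card_biUnion_of_card_eq (h𝓑 : (𝓑 : Set (Finset X)).PairwiseDisjoint id)
    (hcard : ∀ B ∈ 𝓑, #B = d) {𝓒 : Finset (Finset X)} (h𝓒 : 𝓒 ⊆ 𝓑) :
    #(𝓒.biUnion id) = #𝓒 * d := by
  rw [card_biUnion (h𝓑.subset h𝓒)]
  exact sum_const_nat fun B hB => hcard B (h𝓒 hB)

lemma exists_card_eq_meetCount_le (h𝓑 : (𝓑 : Set (Finset X)).PairwiseDisjoint id)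
    (hcard : ∀ B ∈ 𝓑, #B = d) {c m : ℕ} (hc : c ≤ #𝓑) (hm : m ≤ c * d) :
    ∃ T : Finset X, #T = m ∧ meetCount 𝓑 T ≤ c := by
  obtain ⟨𝓒, h𝓒, h𝓒card⟩ := exists_subset_card_eq hc
  obtain ⟨T, hTU, hT⟩ := exists_subset_card_eq (s := 𝓒.biUnion id) (n := m)
    (by rwa [card_biUnion_of_card_eq h𝓑 hcard h𝓒, h𝓒card])
  refine ⟨T, hT, h𝓒card ▸ card_le_card fun B hB => ?_⟩
  obtain ⟨hB𝓑, hBT⟩ := mem_filter.1 hB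
  obtain ⟨x, hxB, hxT⟩ := not_disjoint_iff.1 hBT
  obtain ⟨C, hC, hxC⟩ := mem_biUnion.1 (hTU hxT)
  rwa [h𝓑.elim_finset hB𝓑 (h𝓒 hC) x hxB hxC]

lemma exists_card_eq_le_meetCount [Fintype X] (h𝓑 : (𝓑 : Set (Finset X)).PairwiseDisjoint id)
    (hne : ∀ B ∈ 𝓑, B.Nonempty) {k m : ℕ} (hk : k ≤ #𝓑) (hkm : k ≤ m)
    (hm : m ≤ Fintype.card X) :
    ∃ S : Finset X, #S = m ∧ k ≤ meetCount 𝓑 S := by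
  obtain ⟨𝓒, h𝓒, rfl⟩ := exists_subset_card_eq hk
  choose p hp using fun B : 𝓒 => hne B (h𝓒 B.2)
  have hp_inj : Injective p := fun B C hBC =>
    Subtype.ext (h𝓑.elim_finset (h𝓒 B.2) (h𝓒 C.2) _ (hp B) (hBC ▸ hp C))
  obtain ⟨S, hpS, hS⟩ := exists_superset_card_eq (s := univ.image p)
    (by rwa [card_image_of_injective _ hp_inj, card_univ, Fintype.card_coe]) hm
  refine ⟨S, hS, card_le_card fun B hB => mem_filter.2 ⟨h𝓒 hB, ?_⟩⟩
  exact not_disjoint_iff.2 ⟨p ⟨B, hB⟩, hp _, hpS (mem_image_of_mem _ (mem_univ _))⟩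

lemma card_mul_eq_card_of_cover [Fintype X] (h𝓑 : (𝓑 : Set (Finset X)).PairwiseDisjoint id)
    (hcard : ∀ B ∈ 𝓑, #B = d) (hcover : ∀ x, ∃ B ∈ 𝓑, x ∈ B) :
    #𝓑 * d = Fintype.card X := by
  rw [← card_biUnion_of_card_eq h𝓑 hcard Subset.rfl, ← card_univ]
  congr 1
  exact eq_univ_of_forall fun x => mem_biUnion.2 (hcover x)

lemma exists_card_eq_meetCount_lt [Fintype X] (h𝓑 : (𝓑 : Set (Finset X)).PairwiseDisjoint id)
    (hcard : ∀ B ∈ 𝓑, #B = d) (hcover : ∀ x, ∃ B ∈ 𝓑, x ∈ B) (hd : 2 ≤ d)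
    (h𝓑card : 2 ≤ #𝓑)
    {m : ℕ} (hm : 2 ≤ m) (hmX : 2 * m ≤ Fintype.card X) :
    ∃ S T : Finset X, #S = m ∧ #T = m ∧ meetCount 𝓑 T < meetCount 𝓑 S := by
  have hX := card_mul_eq_card_of_cover h𝓑 hcard hcover
  obtain ⟨c, hmc, hcm, hc𝓑⟩ := exists_ceilDiv_lt hd h𝓑card hm (hX ▸ hmX)
  obtain ⟨T, hT, hTc⟩ := exists_card_eq_meetCount_le h𝓑 hcard hc𝓑.le hmc
  obtain ⟨S, hS, hcS⟩ := exists_card_eq_le_meetCount h𝓑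
    (fun B hB => card_pos.1 (by rw [hcard B hB]; omega)) hc𝓑 hcm (by omega)
  exact ⟨S, T, hS, hT, by omega⟩

end MeetCount

section Translates

variable {X : Type*} [DecidableEq X]

lemma image_image_perm (Δ : Finset X) (a b : Perm X) :
    (Δ.image b).image a = Δ.image ⇑(a * b) := by
  rw [image_image, Perm.coe_mul]

variable [Fintype X] (A : Subgroup (Perm X)) (Δ : Finset X)

open Classical in
noncomputable def translates : Finset (Finset X) :=
  {B | ∃ a ∈ A, Δ.image a = B}

variable {A Δ}

lemma mem_translates {B : Finset X} : B ∈ translates A Δ ↔ ∃ a ∈ A, Δ.image a = B := by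
  simp [translates]

lemma translates_image {a : Perm X} (ha : a ∈ A) :
    (translates A Δ).image (image a) = translates A Δ := by
  ext B
  simp only [mem_image, mem_translates]
  constructor
  · rintro ⟨_, ⟨b, hb, rfl⟩, rfl⟩
    exact ⟨a * b, A.mul_mem ha hb, (image_image_perm Δ a b).symm⟩
  · rintro ⟨b, hb, rfl⟩
    refine ⟨_, ⟨a⁻¹ * b, A.mul_mem (A.inv_mem ha) hb, rfl⟩, ?_⟩
    rw [image_image_perm, mul_inv_cancel_left]

lemma card_of_mem_translates {B : Finset X} (hB : B ∈ translates A Δ) : #B = #Δ := by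
  obtain ⟨a, -, rfl⟩ := mem_translates.1 hB
  exact card_image_of_injective _ a.injective

lemma exists_mem_translates (htrans : ∀ x y : X, ∃ a ∈ A, a x = y) (hΔ : Δ.Nonempty)
    (x : X) :
    ∃ B ∈ translates A Δ, x ∈ B := by
  obtain ⟨y, hy⟩ := hΔ
  obtain ⟨a, ha, rfl⟩ := htrans y x
  exact ⟨_, mem_translates.2 ⟨a, ha, rfl⟩, mem_image_of_mem _ hy⟩

lemma pairwiseDisjoint_translates
    (hblock : ∀ a ∈ A, Δ.image a = Δ ∨ Disjoint (Δ.image a) Δ) :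
    (translates A Δ : Set (Finset X)).PairwiseDisjoint id := by
  rintro _ hB _ hC hBC
  obtain ⟨a, ha, rfl⟩ := mem_translates.1 hB
  obtain ⟨b, hb, rfl⟩ := mem_translates.1 hC
  have hab : (Δ.image ⇑(b⁻¹ * a)).image b = Δ.image a := by
    rw [image_image_perm, mul_inv_cancel_left]
  rcases hblock _ (A.mul_mem (A.inv_mem hb) ha) with h | h
  · exact absurd (by rw [← hab, h]) hBC
  · rw [← hab]
    exact (disjoint_image b.injective).2 h

end Translates

/-- A transitive, imprimitive subgroup of `Sym({1,…,n})` does not act transitively on the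
`m`-element subsets of `{1,…,n}`, whenever `2 ≤ m` and `2m ≤ n`. -/
theorem imprimitive_not_transitive_on_subsets
    (n m : ℕ) (hm : 2 ≤ m) (hmn : 2 * m ≤ n)
    (A : Subgroup (Equiv.Perm (Fin n)))
    (htrans : ∀ x y : Fin n, ∃ a ∈ A, a x = y)
    (himprim : ∃ Δ : Finset (Fin n), 1 < Δ.card ∧ Δ.card < n ∧
      ∀ a ∈ A, Δ.image (a : Fin n → Fin n) = Δ ∨ Disjoint (Δ.image (a : Fin n → Fin n)) Δ) :
    ¬ (∀ S T : Finset (Fin n), S.card = m → T.card = m →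
        ∃ a ∈ A, S.image (a : Fin n → Fin n) = T) := by
  intro hsets
  obtain ⟨Δ, hΔ, hΔn, hblock⟩ := himprim
  have h𝓑 := pairwiseDisjoint_translates hblock
  have hcard : ∀ B ∈ translates A Δ, #B = #Δ := fun _ => card_of_mem_translates
  have hcover := exists_mem_translates htrans (card_pos.1 (by omega : 0 < #Δ))
  have hX : #(translates A Δ) * #Δ = n := by
    rw [card_mul_eq_card_of_cover h𝓑 hcard hcover, Fintype.card_fin]
  have h𝓑card : 2 ≤ #(translates A Δ) := by
    refine Nat.lt_of_mul_lt_mul_right (a := #Δ) ?_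
    rwa [hX, one_mul]
  obtain ⟨S, T, hS, hT, hTS⟩ := exists_card_eq_meetCount_lt h𝓑 hcard hcover hΔ h𝓑card hm
    (by rwa [Fintype.card_fin])
  obtain ⟨a, ha, rfl⟩ := hsets S T hS hT
  rw [meetCount_image a.injective (translates_image ha)] at hTS
  exact hTS.false
end

section
/- Let n be a positive integer, let A be a transitive and imprimitive subgroup of the symmetric group Sym({1,…,n}), and let p be a prime number with 2p > n. Then p does not divide the order of A. -/
/-!
Take `g ∈ A` of order `p` (Cauchy) and a block `B` with `1 < |B|`, translated so that it contains
a point moved by `g`. Since `B` is a proper block of a transitive group, `2|B| ≤ n`. If `g`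
stabilises `B`, then `B` contains a `⟨g⟩`-orbit of length `p`, so `p ≤ |B|`; otherwise the `p`
translates `gᵏB` are pairwise disjoint, so `p|B| ≤ n`. Either way `2p ≤ n`.
-/

open MulAction Subgroup Pointwise

namespace MulAction

variable {G X : Type*} [Group G] [MulAction G X] [Finite X]

theorem ncard_orbit_zpowers_of_orderOf_prime {p : ℕ} [Fact p.Prime] {g : G}
    (hg : orderOf g = p) {x : X} (hx : g • x ≠ x) :
    (orbit (zpowers g) x).ncard = p := by
  have hper : Function.IsPeriodicPt (g • ·) p x := by
    rw [Function.IsPeriodicPt, Function.IsFixedPt, smul_iterate_apply, ← hg, pow_orderOf_eq_one,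
      one_smul]
  cases nonempty_fintype (orbit (zpowers g) x)
  rw [← Nat.card_coe_set_eq, Nat.card_eq_fintype_card, ← minimalPeriod_eq_card]
  exact Function.minimalPeriod_eq_prime hper hx

theorem IsBlock.ncard_mul_ncard_orbit_le {B : Set X} (hB : IsBlock G B) :
    B.ncard * (orbit G B).ncard ≤ Nat.card X := by
  have hdisj : (orbit G B).PairwiseDisjoint id := by
    rwa [isBlock_iff_pairwiseDisjoint_range_smul] at hB
  have hcard : ∀ C ∈ orbit G B, C.ncard = B.ncard := by
    rintro _ ⟨g, rfl⟩
    exact Set.ncard_smul_set g B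
  calc B.ncard * (orbit G B).ncard = ∑ᶠ C ∈ orbit G B, C.ncard := by
        rw [finsum_mem_congr rfl hcard, finsum_mem_eq_finite_toFinset_sum _ (Set.toFinite _),
          Finset.sum_const, smul_eq_mul, ← Set.ncard_eq_toFinset_card _, mul_comm]
    _ = (⋃ C ∈ orbit G B, C).ncard :=
        (Set.toFinite _).ncard_biUnion (fun C _ => Set.toFinite C) hdisj |>.symm
    _ ≤ Nat.card X := Set.ncard_le_card _

theorem IsBlock.prime_le_ncard_or_prime_mul_ncard_le {B : Set X} (hB : IsBlock G B)
    {p : ℕ} [Fact p.Prime] {g : G} (hg : orderOf g = p) {x : X} (hxB : x ∈ B)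
    (hx : g • x ≠ x) : p ≤ B.ncard ∨ p * B.ncard ≤ Nat.card X := by
  by_cases hgB : g • B = B
  · left
    have horbit : orbit (zpowers g) x ⊆ B := by
      rintro _ ⟨⟨h, hh⟩, rfl⟩
      have hhB : h • B = B := zpowers_le.mpr (mem_stabilizer_iff.mpr hgB) hh
      exact hhB ▸ Set.smul_mem_smul_set hxB
    rw [← ncard_orbit_zpowers_of_orderOf_prime hg hx]
    exact Set.ncard_le_ncard horbit
  · right
    rw [← ncard_orbit_zpowers_of_orderOf_prime hg hgB, mul_comm]
    exact (hB.subgroup (H := zpowers g)).ncard_mul_ncard_orbit_le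

theorem IsBlock.two_mul_le_card_of_orderOf_prime [IsPretransitive G X] [FaithfulSMul G X]
    {B : Set X} (hB : IsBlock G B) (hB_one : 1 < B.ncard) (hB_univ : B ≠ Set.univ)
    {p : ℕ} [Fact p.Prime] {g : G} (hg : orderOf g = p) : 2 * p ≤ Nat.card X := by
  have hB_half : 2 * B.ncard ≤ Nat.card X := by
    by_contra! h
    exact hB_univ (hB.eq_univ_of_card_lt (by omega))
  obtain ⟨y, hy⟩ : ∃ y : X, g • y ≠ y := by
    by_contra! h
    have : g = 1 := eq_of_smul_eq_smul fun y => by rw [h y, one_smul]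
    exact (Fact.out : p.Prime).one_lt.ne' (hg ▸ this ▸ orderOf_one)
  obtain ⟨x, hx⟩ := Set.nonempty_of_ncard_ne_zero (by omega : B.ncard ≠ 0)
  obtain ⟨h, rfl⟩ := exists_smul_eq G x y
  have := (hB.translate h).prime_le_ncard_or_prime_mul_ncard_le hg (Set.smul_mem_smul_set hx) hy
  rw [Set.ncard_smul_set] at this
  rcases this with hle | hle <;> nlinarith

end MulAction

theorem prime_not_dvd_card_of_imprimitive_general
    (n : ℕ)
    (A : Subgroup (Equiv.Perm (Fin n)))
    (htrans : ∀ x y : Fin n, ∃ a ∈ A, a x = y)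
    (himprim : ∃ Δ : Finset (Fin n), 1 < Δ.card ∧ Δ.card < n ∧
      ∀ a ∈ A, Δ.image (a : Fin n → Fin n) = Δ ∨ Disjoint (Δ.image (a : Fin n → Fin n)) Δ)
    (p : ℕ) (hp : p.Prime) (hpn : n < 2 * p) :
    ¬ p ∣ Nat.card A := by
  intro hdvd
  obtain ⟨Δ, hΔ_one, hΔ_lt, hΔ_block⟩ := himprim
  have : Fact p.Prime := ⟨hp⟩
  obtain ⟨g, hg⟩ := exists_prime_orderOf_dvd_card' p hdvd
  have : IsPretransitive A (Fin n) := ⟨fun x y => by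
    obtain ⟨a, ha, rfl⟩ := htrans x y
    exact ⟨⟨a, ha⟩, rfl⟩⟩
  have hsmul (a : A) : a • (Δ : Set (Fin n)) = Δ.image (a : Fin n → Fin n) := by
    rw [Finset.coe_image, ← Set.image_smul]
    rfl
  have hB : IsBlock A (Δ : Set (Fin n)) := isBlock_iff_smul_eq_or_disjoint.mpr fun a => by
    simpa only [hsmul, Finset.coe_inj, Finset.disjoint_coe] using hΔ_block a a.2
  have hB_univ : (Δ : Set (Fin n)) ≠ Set.univ := fun h => by
    rw [Finset.coe_eq_univ] at h
    simp [h] at hΔ_lt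
  have := hB.two_mul_le_card_of_orderOf_prime (by rwa [Set.ncard_coe_finset]) hB_univ hg
  rw [Nat.card_fin] at this
  omega

/-- If `A` is a transitive, imprimitive subgroup of `Sym({1,…,n})` and `p` is a prime with
`2p > n`, then `p` does not divide the order of `A`. -/
theorem prime_not_dvd_card_of_imprimitive
    (n : ℕ) (hn : 0 < n)
    (A : Subgroup (Equiv.Perm (Fin n)))
    (htrans : ∀ x y : Fin n, ∃ a ∈ A, a x = y)
    (himprim : ∃ Δ : Finset (Fin n), 1 < Δ.card ∧ Δ.card < n ∧
      ∀ a ∈ A, Δ.image (a : Fin n → Fin n) = Δ ∨ Disjoint (Δ.image (a : Fin n → Fin n)) Δ)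
    (p : ℕ) (hp : p.Prime) (hpn : n < 2 * p) :
    ¬ p ∣ Nat.card A :=
  prime_not_dvd_card_of_imprimitive_general n A htrans himprim p hp hpn
end
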